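/- For every even integer m ≥ 6, the girth of the graph H_m is 4, i.e., the length of a shortest cycle in H_m is 4. -/

import Mathlib

open SimpleGraph

/-- Vertex type for the graphs on `2m+1` vertices: `Sum.inl i` is the vertex `pᵢ`,
`Sum.inr (Sum.inl i)` is the vertex `qᵢ` (indices taken modulo `m`),
and `Sum.inr (Sum.inr ())` is the apex vertex `a`. -/
abbrev GVert (m : ℕ) := Sum (ZMod m) (Sum (ZMod m) Unit)

/-- The vertex `pᵢ`. -/
def pV {m : ℕ} (i : ZMod m) : GVert m := Sum.inl i

/-- The vertex `qᵢ`. -/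
def qV {m : ℕ} (i : ZMod m) : GVert m := Sum.inr (Sum.inl i)

/-- The apex vertex `a`. -/
def aV (m : ℕ) : GVert m := Sum.inr (Sum.inr ())

/-- The graph `H_m` (intended for even `m ≥ 6`): edges are `a qᵢ` for all `i`,
`pᵢ pᵢ₊₁` for all `i`, and `pᵢ q_{i + (2k-1)}` for all `i` and `0 ≤ k ≤ (m-2)/2`,
all indices taken modulo `m`. -/
def HGraph (m : ℕ) : SimpleGraph (GVert m) :=
  SimpleGraph.fromRel (fun u v =>
    (∃ i : ZMod m, u = aV m ∧ v = qV i) ∨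
    (∃ i : ZMod m, u = pV i ∧ v = pV (i + 1)) ∨
    (∃ (i : ZMod m) (k : ℕ), k ≤ (m - 2) / 2 ∧
      u = pV i ∧ v = qV (i + (2 * (k : ZMod m) - 1))))

/-! Since `m` is even, the parity of an index modulo `m` is well defined. Sending `a` to `0`,
`qⱼ` to `1` or `4` and `pᵢ` to `3` or `2` according to the parity of the index is a graph
homomorphism onto the 5-cycle `a, q_even, p_odd, p_even, q_odd`, so `H_m` has no triangle,
while `a, q₀, p₁, q₂` is a 4-cycle. -/

namespace SimpleGraph

variable {V W : Type*} {G : SimpleGraph V} {H : SimpleGraph W} {n : ℕ}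

def fromRelHom {r : V → V → Prop} (f : V → W) (hf : ∀ ⦃u v⦄, r u v → H.Adj (f u) (f v)) :
    fromRel r →g H where
  toFun := f
  map_rel' h := ((fromRel_adj r _ _).mp h).2.elim (fun h ↦ hf h) fun h ↦ (hf h).symm

theorem CliqueFree.of_hom (f : G →g H) (h : H.CliqueFree n) : G.CliqueFree n := by
  rw [cliqueFree_iff] at h ⊢
  exact ⟨fun c ↦ h.false ((f.comp c.toHom).toCopy (Hom.injective_of_top_hom _))⟩

theorem cycleGraph_five_cliqueFree_three : (cycleGraph 5).CliqueFree 3 := by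
  intro s hs
  obtain ⟨a, b, c, hab, hac, hbc, -⟩ := is3Clique_iff.mp hs
  rw [cycleGraph_adj] at hab hac hbc
  revert a b c
  decide

theorem four_le_egirth_of_cliqueFree_three (h : G.CliqueFree 3) : 4 ≤ G.egirth := by
  refine le_egirth.mpr fun a w hw ↦ ?_
  have hne : w.length ≠ 3 := fun hlen ↦
    let ⟨s, hs⟩ := is3Clique_iff_exists_cycle_length_three.mpr ⟨a, w, hw, hlen⟩
    h s hs
  have := hw.three_le_length
  exact_mod_cast (show 4 ≤ w.length by omega)

theorem girth_eq_four_of_cliqueFree_three (h : G.CliqueFree 3) {a : V} {w : G.Walk a a}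
    (hw : w.IsCycle) (hlen : w.length = 4) : G.girth = 4 := by
  have : G.egirth = 4 :=
    le_antisymm (by simpa [hlen] using egirth_le_length hw) (four_le_egirth_of_cliqueFree_three h)
  rw [girth, this]
  rfl

theorem exists_isCycle_length_four {a b c d : V} (hab : G.Adj a b) (hbc : G.Adj b c)
    (hcd : G.Adj c d) (hda : G.Adj d a) (hac : a ≠ c) (hbd : b ≠ d) :
    ∃ w : G.Walk a a, w.IsCycle ∧ w.length = 4 := by
  refine ⟨.cons hab (.cons hbc (.cons hcd (.cons hda .nil))), ?_, rfl⟩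
  simp [Walk.isCycle_def, hab.ne, hab.ne', hbc.ne, hcd.ne, hda.ne, hda.ne', hac, hac.symm, hbd]

end SimpleGraph

namespace HGraph

variable {m : ℕ}

def cycleGraphFiveLabel (hm : 2 ∣ m) : GVert m → Fin 5
  | Sum.inl i => if ZMod.castHom hm (ZMod 2) i = 0 then 3 else 2
  | Sum.inr (Sum.inl j) => if ZMod.castHom hm (ZMod 2) j = 0 then 1 else 4
  | Sum.inr (Sum.inr _) => 0

def toCycleGraphFive (hm : 2 ∣ m) : HGraph m →g cycleGraph 5 :=
  fromRelHom (cycleGraphFiveLabel hm) <| by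
    have htwo : ZMod.castHom hm (ZMod 2) 2 = 0 := (map_ofNat _ 2).trans (by decide)
    rintro _ _ (⟨i, rfl, rfl⟩ | ⟨i, rfl, rfl⟩ | ⟨i, k, -, rfl, rfl⟩)
    · simp only [aV, qV, cycleGraphFiveLabel]
      split_ifs <;> decide
    · simp only [pV, cycleGraphFiveLabel, map_add, map_one]
      generalize ZMod.castHom hm (ZMod 2) i = x
      revert x
      decide
    · simp only [pV, qV, cycleGraphFiveLabel, map_add, map_sub, map_mul, map_one, map_natCast,
        htwo, zero_mul, zero_sub]
      generalize ZMod.castHom hm (ZMod 2) i = x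
      revert x
      decide

theorem adj_aV_qV (i : ZMod m) : (HGraph m).Adj (aV m) (qV i) :=
  (fromRel_adj _ _ _).mpr ⟨Sum.inr_injective.ne Sum.inr_ne_inl, .inl (.inl ⟨i, rfl, rfl⟩)⟩

theorem adj_pV_qV (i : ZMod m) {k : ℕ} (hk : k ≤ (m - 2) / 2) :
    (HGraph m).Adj (pV i) (qV (i + (2 * (k : ZMod m) - 1))) :=
  (fromRel_adj _ _ _).mpr ⟨Sum.inl_ne_inr, .inl (.inr (.inr ⟨i, k, hk, rfl, rfl⟩))⟩

theorem cliqueFree_three (hm : 2 ∣ m) : (HGraph m).CliqueFree 3 :=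
  cycleGraph_five_cliqueFree_three.of_hom (toCycleGraphFive hm)

end HGraph

/-- For every even integer `m ≥ 6`, the girth of the graph `H_m` is `4`. -/
theorem hGraph_girth (m : ℕ) (h6 : 6 ≤ m) (heven : Even m) :
    (HGraph m).girth = 4 := by
  have hq0 : (HGraph m).Adj (pV 1) (qV 0) := by
    simpa using HGraph.adj_pV_qV (1 : ZMod m) (k := 0) (Nat.zero_le _)
  have hq2 : (HGraph m).Adj (pV 1) (qV 2) := by
    simpa [one_add_one_eq_two] using HGraph.adj_pV_qV (1 : ZMod m) (k := 1) (by omega)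
  have htwo : (0 : ZMod m) ≠ 2 := fun h ↦ by
    have := Nat.le_of_dvd two_pos ((ZMod.natCast_eq_zero_iff 2 m).mp (by exact_mod_cast h.symm))
    omega
  obtain ⟨w, hw, hlen⟩ := exists_isCycle_length_four (HGraph.adj_aV_qV 0) hq0.symm hq2
    (HGraph.adj_aV_qV 2).symm Sum.inr_ne_inl (by simpa [qV] using htwo)
  exact girth_eq_four_of_cliqueFree_three (HGraph.cliqueFree_three heven.two_dvd) hw hlen
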